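/- If a semi-invariant submanifold M of a normal complex contact metric manifold is totally umbilical, then M is an invariant submanifold; that is, D⊥ = 0. -/

import Mathlib

/-!
Algebraic model of a normal complex contact metric manifold `M̄` together with a
submanifold `M` tangent to the vertical vector fields `U` and `V`.

`F` plays the role of the commutative ring of smooth functions on `M̄` and `X`
the `F`-module of smooth vector fields on `M̄`.
-/

/-- A normal complex contact metric manifold `M̄` (of real dimension `4m+2`),
modeled algebraically: `g` is the Hermitian metric, `J` the complex structure,
`G`, `H = GJ` the structure tensors, `U`, `V = -JU` the vertical vector fields
with dual 1-forms `u`, `v`, `σ K = g (∇̄_K U) V`, `nabla` the Levi-Civita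
connection `∇̄` of `g`, `act` the derivative of functions along vector fields,
and `lie` the Lie bracket.  Korkmaz normality is recorded through the formulas
`∇̄_K U = -GK + σ(K)V` and `∇̄_K V = -HK - σ(K)U`. -/
structure NCCMM (F : Type*) (X : Type*) [CommRing F] [AddCommGroup X] [Module F X] where
  g : X →ₗ[F] X →ₗ[F] F
  J : X →ₗ[F] X
  G : X →ₗ[F] X
  H : X →ₗ[F] X
  U : X
  V : X
  u : X →ₗ[F] F
  v : X →ₗ[F] F
  σ : X →ₗ[F] F
  nabla : X → X → X
  act : X → F → F
  lie : X → X → X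
  g_symm : ∀ K L, g K L = g L K
  g_hermitian : ∀ K L, g (J K) (J L) = g K L
  H_eq : ∀ K, H K = G (J K)
  V_eq : V = - J U
  J_sq : ∀ K, J (J K) = - K
  G_sq : ∀ K, G (G K) = - K + u K • U + v K • V
  H_sq : ∀ K, H (H K) = - K + u K • U + v K • V
  GJ_anti : ∀ K, G (J K) = - J (G K)
  G_U : G U = 0
  g_G_skew : ∀ K L, g (G K) L = - g K (G L)
  u_eq : ∀ K, u K = g K U
  v_eq : ∀ K, v K = g K V
  nabla_add₁ : ∀ K K' L, nabla (K + K') L = nabla K L + nabla K' L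
  nabla_add₂ : ∀ K L L', nabla K (L + L') = nabla K L + nabla K L'
  nabla_smul₁ : ∀ (a : F) (K L : X), nabla (a • K) L = a • nabla K L
  metric_compat : ∀ K L Z, act K (g L Z) = g (nabla K L) Z + g L (nabla K Z)
  torsion_free : ∀ K L, nabla K L - nabla L K = lie K L
  σ_eq : ∀ K, σ K = g (nabla K U) V
  nabla_U : ∀ K, nabla K U = - G K + σ K • V
  nabla_V : ∀ K, nabla K V = - H K - σ K • U

/-- A submanifold `M` of `M̄` tangent to `U` and `V`, described by the
orthogonal projections `tp` (tangential part) and `np` (normal part) of the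
ambient vector fields; vector fields tangent to `M` are those with `tp K = K`
and vector fields normal to `M` are those with `np N = N`. -/
structure SubmanifoldData (F : Type*) (X : Type*) [CommRing F] [AddCommGroup X]
    [Module F X] (A : NCCMM F X) where
  tp : X →ₗ[F] X
  np : X →ₗ[F] X
  tp_add_np : ∀ K, tp K + np K = K
  tp_tp : ∀ K, tp (tp K) = tp K
  np_np : ∀ K, np (np K) = np K
  np_tp : ∀ K, np (tp K) = 0
  tp_np : ∀ K, tp (np K) = 0
  g_tp_np : ∀ K L, A.g (tp K) (np L) = 0
  U_tang : tp A.U = A.U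
  V_tang : tp A.V = A.V
  lie_tang : ∀ K L, tp K = K → tp L = L → tp (A.lie K L) = A.lie K L

namespace SubmanifoldData

variable {F X : Type*} [CommRing F] [AddCommGroup X] [Module F X]
variable {A : NCCMM F X} (S : SubmanifoldData F X A)

/-- The induced connection `∇` on `M` (Gauss formula `∇̄_K L = ∇_K L + h(K,L)`). -/
def conn (K L : X) : X := S.tp (A.nabla K L)

/-- The second fundamental form `h` of `M`. -/
def sff (K L : X) : X := S.np (A.nabla K L)

/-- The shape operator `A_N` (Weingarten formula `∇̄_K N = -A_N K + ∇⊥_K N`). -/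
def shape (N K : X) : X := - S.tp (A.nabla K N)

/-- The normal connection `∇⊥`. -/
def nconn (K N : X) : X := S.np (A.nabla K N)

/-- `P K`: the tangential part of `G K`, so that `G K = P K + Q K`. -/
def P (K : X) : X := S.tp (A.G K)

/-- `Q K`: the normal part of `G K`, so that `G K = P K + Q K`. -/
def Q (K : X) : X := S.np (A.G K)

/-- `B N`: the tangential part of `G N` for normal `N`, so `G N = B N + C N`. -/
def B (N : X) : X := S.tp (A.G N)

/-- `C N`: the normal part of `G N` for normal `N`, so `G N = B N + C N`. -/
def C (N : X) : X := S.np (A.G N)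

/-- `K` belongs to `sp{U,V}⊥ ⊂ TM`: it is tangent to `M` and orthogonal to `U`, `V`. -/
def Hor (K : X) : Prop := S.tp K = K ∧ A.g K A.U = 0 ∧ A.g K A.V = 0

/-- The (invariant) distribution `D = {K ∈ sp{U,V}⊥ : Q K = 0}`. -/
def Dinv (K : X) : Prop := S.Hor K ∧ S.Q K = 0

/-- The (anti-invariant) distribution `D⊥ = {K ∈ sp{U,V}⊥ : P K = 0}`. -/
def Danti (K : X) : Prop := S.Hor K ∧ S.P K = 0

/-- `M` is a semi-invariant submanifold: `TM = D ⊕ D⊥ ⊕ sp{U,V}`, the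
distribution `D` is invariant under `G` and `H`, and `G`, `H` map `D⊥`
into the normal bundle `TM⊥`. -/
def SemiInvariant : Prop :=
  (∀ K, S.tp K = K → ∃ (K₁ K₂ : X) (a b : F), S.Dinv K₁ ∧ S.Danti K₂ ∧
      K = K₁ + K₂ + a • A.U + b • A.V) ∧
  ((A.G : X → X) '' {K | S.Dinv K} = {K | S.Dinv K}) ∧
  ((A.H : X → X) '' {K | S.Dinv K} = {K | S.Dinv K}) ∧
  (∀ K, S.Danti K → S.np (A.G K) = A.G K ∧ S.np (A.H K) = A.H K)

/-- `M` is totally umbilical: `h(K,L) = g(K,L) μ` for all tangent `K`, `L`,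
where `μ` is the mean curvature (normal) vector field. -/
def TotallyUmbilical : Prop :=
  ∃ μ : X, S.np μ = μ ∧
    ∀ K L : X, S.tp K = K → S.tp L = L → S.sff K L = A.g K L • μ

end SubmanifoldData

/-!
For tangent `K`, normality gives `∇̄_K U = -GK + σ(K)V`, whose normal part is
`h(K,U) = -QK`, while umbilicity gives `h(K,U) = g(K,U) μ = 0` once `K ⊥ U`.
So on `D⊥`, where also `P` vanishes, `G` is zero, and `G² = -I + u⊗U + v⊗V`
then kills `K`.
-/

namespace NCCMM

variable {F X : Type*} [CommRing F] [AddCommGroup X] [Module F X] (A : NCCMM F X)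

theorem eq_zero_of_G_eq_zero {K : X} (hKU : A.g K A.U = 0) (hKV : A.g K A.V = 0)
    (hGK : A.G K = 0) : K = 0 := by
  have h := A.G_sq K
  rw [hGK, map_zero, A.u_eq, A.v_eq, hKU, hKV, zero_smul, zero_smul, add_zero, add_zero] at h
  exact neg_eq_zero.mp h.symm

end NCCMM

namespace SubmanifoldData

variable {F X : Type*} [CommRing F] [AddCommGroup X] [Module F X]
variable {A : NCCMM F X} (S : SubmanifoldData F X A)

theorem np_eq_zero_of_tp_eq_self {K : X} (hK : S.tp K = K) : S.np K = 0 := by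
  simpa [hK] using S.tp_add_np K

theorem P_add_Q (K : X) : S.P K + S.Q K = A.G K :=
  S.tp_add_np (A.G K)

theorem sff_U (K : X) : S.sff K A.U = - S.Q K := by
  rw [sff, A.nabla_U, map_add, map_neg, map_smul, S.np_eq_zero_of_tp_eq_self S.V_tang,
    smul_zero, add_zero, Q]

theorem Q_eq_zero_of_totallyUmbilical (hTU : S.TotallyUmbilical) {K : X} (hK : S.tp K = K)
    (hKU : A.g K A.U = 0) : S.Q K = 0 := by
  obtain ⟨μ, -, humb⟩ := hTU
  have h := S.sff_U K
  rw [humb K A.U hK S.U_tang, hKU, zero_smul] at h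
  exact neg_eq_zero.mp h.symm

end SubmanifoldData

section

variable {F X : Type*} [CommRing F] [AddCommGroup X] [Module F X]

theorem statement18_general (A : NCCMM F X) (S : SubmanifoldData F X A)
    (hTU : S.TotallyUmbilical) :
    ∀ K : X, S.Danti K → K = 0 := by
  rintro K ⟨⟨hK, hKU, hKV⟩, hPK⟩
  have hGK : A.G K = 0 := by
    rw [← S.P_add_Q, hPK, S.Q_eq_zero_of_totallyUmbilical hTU hK hKU, add_zero]
  exact A.eq_zero_of_G_eq_zero hKU hKV hGK

/-- a totally umbilical semi-invariant submanifold `M` is an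
invariant submanifold, i.e. `D⊥ = 0`. -/
theorem statement18 (A : NCCMM F X) (S : SubmanifoldData F X A)
    (hSI : S.SemiInvariant) (hTU : S.TotallyUmbilical) :
    ∀ K : X, S.Danti K → K = 0 :=
  statement18_general A S hTU

end
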